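/- Let R be any SEP instance with minimum density k and minimum boundary density k_B. Then k/4 ≤ k_B ≤ k, and hence k ≤ 4·k_B (so minimizing the boundary density is a 4-approximation for SEP). -/

import Mathlib

/-- One of the four axis-aligned escape directions. -/
inductive Dir | left | right | up | down
deriving DecidableEq

instance : Fintype Dir :=
  ⟨{Dir.left, Dir.right, Dir.up, Dir.down}, fun x => by cases x <;> simp⟩

/-- `q` is a point of the grid `{1,…,N} × {1,…,N}`. -/
def inGrid (N : ℕ) (q : ℕ × ℕ) : Prop := 1 ≤ q.1 ∧ q.1 ≤ N ∧ 1 ≤ q.2 ∧ q.2 ≤ N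

/-- `q` is a boundary grid point: a grid point with some coordinate equal to `1` or `N`. -/
def onBoundary (N : ℕ) (q : ℕ × ℕ) : Prop :=
  inGrid N q ∧ (q.1 = 1 ∨ q.1 = N ∨ q.2 = 1 ∨ q.2 = N)

/-- The escape path of a grid point in a given direction. -/
def sepPath (N : ℕ) (p : ℕ × ℕ) : Dir → Set (ℕ × ℕ)
  | Dir.right => {q | q.2 = p.2 ∧ p.1 ≤ q.1 ∧ q.1 ≤ N}
  | Dir.left  => {q | q.2 = p.2 ∧ 1 ≤ q.1 ∧ q.1 ≤ p.1}
  | Dir.up    => {q | q.1 = p.1 ∧ p.2 ≤ q.2 ∧ q.2 ≤ N}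
  | Dir.down  => {q | q.1 = p.1 ∧ 1 ≤ q.2 ∧ q.2 ≤ p.2}

/-- The endpoint of the escape path of a grid point in a given direction. -/
def sepEnd (N : ℕ) (p : ℕ × ℕ) : Dir → ℕ × ℕ
  | Dir.right => (N, p.2)
  | Dir.left  => (1, p.2)
  | Dir.up    => (p.1, N)
  | Dir.down  => (p.1, 1)

/-- Density at grid point `q` of the escape assignment `σ` for the family of points `R`. -/
noncomputable def sepDensity {n : ℕ} (N : ℕ) (R : Fin n → ℕ × ℕ) (σ : Fin n → Dir)
    (q : ℕ × ℕ) : ℕ :=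
  {i | q ∈ sepPath N (R i) (σ i)}.ncard

/-- The minimum density `k` over all escape assignments. -/
noncomputable def sepOpt {n : ℕ} (N : ℕ) (R : Fin n → ℕ × ℕ) : ℕ :=
  sInf {k | ∃ σ : Fin n → Dir, ∀ q, inGrid N q → sepDensity N R σ q ≤ k}

/-- The minimum boundary density `k_B` over all escape assignments. -/
noncomputable def sepOptB {n : ℕ} (N : ℕ) (R : Fin n → ℕ × ℕ) : ℕ :=
  sInf {k | ∃ σ : Fin n → Dir, ∀ q, onBoundary N q → sepDensity N R σ q ≤ k}

/-!
A point `q` on the escape path of `p` in direction `d` shares its row or column with the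
path's endpoint `sepEnd N p d`, which therefore lies on the same path and is one of the four
boundary points `(1, q.2)`, `(N, q.2)`, `(q.1, 1)`, `(q.1, N)`. Hence the density at `q` is
at most the sum of the densities at these four boundary points, so an assignment of boundary
density `k_B` has density at most `4 k_B`. Conversely an assignment of density `k` has
boundary density at most `k`.
-/

def crossEnds (N : ℕ) (q : ℕ × ℕ) : Finset (ℕ × ℕ) :=
  {(1, q.2), (N, q.2), (q.1, 1), (q.1, N)}

lemma onBoundary_of_mem_crossEnds {N : ℕ} {q e : ℕ × ℕ} (hq : inGrid N q)
    (he : e ∈ crossEnds N q) : onBoundary N e := by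
  obtain ⟨h1, h2, h3, h4⟩ := hq
  simp only [crossEnds, Finset.mem_insert, Finset.mem_singleton] at he
  rcases he with rfl | rfl | rfl | rfl <;> unfold onBoundary inGrid <;> omega

lemma sepEnd_mem_sepPath {N : ℕ} {p q : ℕ × ℕ} {d : Dir} (hq : q ∈ sepPath N p d) :
    sepEnd N p d ∈ sepPath N p d := by
  cases d <;>
    simp only [sepPath, sepEnd, Set.mem_ofPred_eq, true_and, and_true, le_refl] at hq ⊢ <;> omega

lemma sepEnd_mem_crossEnds {N : ℕ} {p q : ℕ × ℕ} {d : Dir} (hq : q ∈ sepPath N p d) :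
    sepEnd N p d ∈ crossEnds N q := by
  cases d <;> simp only [sepPath, Set.mem_ofPred_eq] at hq <;>
    simp [crossEnds, sepEnd, hq.1]

lemma sepDensity_le_sum_crossEnds {n N : ℕ} (R : Fin n → ℕ × ℕ) (σ : Fin n → Dir)
    (q : ℕ × ℕ) :
    sepDensity N R σ q ≤ ∑ e ∈ crossEnds N q, sepDensity N R σ e := by
  have hcover : {i | q ∈ sepPath N (R i) (σ i)} ⊆
      ⋃ e ∈ crossEnds N q, {i | e ∈ sepPath N (R i) (σ i)} := fun i hi =>
    Set.mem_biUnion (sepEnd_mem_crossEnds hi) (sepEnd_mem_sepPath hi)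
  exact (Set.ncard_le_ncard hcover (Set.toFinite _)).trans
    (Finset.set_ncard_biUnion_le _ _)

lemma sepDensity_le_card {n N : ℕ} (R : Fin n → ℕ × ℕ) (σ : Fin n → Dir)
    (q : ℕ × ℕ) : sepDensity N R σ q ≤ n :=
  (Set.ncard_le_card _).trans (Nat.card_fin n).le

section Optimum

variable {n N : ℕ} (R : Fin n → ℕ × ℕ)

lemma exists_density_le_sepOpt :
    ∃ σ : Fin n → Dir, ∀ q, inGrid N q → sepDensity N R σ q ≤ sepOpt N R :=
  Nat.sInf_mem (s := {k | ∃ σ : Fin n → Dir, ∀ q, inGrid N q → sepDensity N R σ q ≤ k})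
    ⟨n, fun _ => Dir.left, fun q _ => sepDensity_le_card R _ q⟩

lemma exists_boundary_density_le_sepOptB :
    ∃ σ : Fin n → Dir, ∀ q, onBoundary N q → sepDensity N R σ q ≤ sepOptB N R :=
  Nat.sInf_mem
    (s := {k | ∃ σ : Fin n → Dir, ∀ q, onBoundary N q → sepDensity N R σ q ≤ k})
    ⟨n, fun _ => Dir.left, fun q _ => sepDensity_le_card R _ q⟩

lemma sepOptB_le_sepOpt : sepOptB N R ≤ sepOpt N R := by
  obtain ⟨σ, hσ⟩ := exists_density_le_sepOpt (N := N) R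
  exact Nat.sInf_le ⟨σ, fun q hq => hσ q hq.1⟩

lemma sepOpt_le_four_mul_sepOptB : sepOpt N R ≤ 4 * sepOptB N R := by
  obtain ⟨σ, hσ⟩ := exists_boundary_density_le_sepOptB (N := N) R
  refine Nat.sInf_le ⟨σ, fun q hq => ?_⟩
  calc sepDensity N R σ q ≤ ∑ e ∈ crossEnds N q, sepDensity N R σ e :=
        sepDensity_le_sum_crossEnds R σ q
    _ ≤ (crossEnds N q).card * sepOptB N R :=
        Finset.sum_le_card_nsmul _ _ _ fun e he => hσ e (onBoundary_of_mem_crossEnds hq he)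
    _ ≤ 4 * sepOptB N R := Nat.mul_le_mul_right _ Finset.card_le_four

end Optimum

theorem sep_four_approx_general {n N : ℕ}
    (R : Fin n → ℕ × ℕ)
    (k kB : ℕ) (hk : k = sepOpt N R) (hkB : kB = sepOptB N R) :
    (k : ℝ) / 4 ≤ kB ∧ kB ≤ k ∧ k ≤ 4 * kB := by
  subst hk hkB
  have hk4 := sepOpt_le_four_mul_sepOptB (N := N) R
  refine ⟨?_, sepOptB_le_sepOpt R, hk4⟩
  have : (sepOpt N R : ℝ) ≤ 4 * sepOptB N R := by exact_mod_cast hk4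
  linarith

/-- For any SEP instance with minimum density `k` and minimum boundary
density `k_B`: `k/4 ≤ k_B ≤ k`, hence `k ≤ 4·k_B`. -/
theorem sep_four_approx {n N : ℕ} (hN : 2 ≤ N)
    (R : Fin n → ℕ × ℕ) (hR : ∀ i, inGrid N (R i))
    (k kB : ℕ) (hk : k = sepOpt N R) (hkB : kB = sepOptB N R) :
    (k : ℝ) / 4 ≤ kB ∧ kB ≤ k ∧ k ≤ 4 * kB :=
  sep_four_approx_general R k kB hk hkB
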